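/- Let V be a discrete gradient vector field on a finite regular CW complex with exactly one critical 0-cell σ. Then from every 0-cell there is a V-path ending at σ. -/
import Mathlib


open Classical

variable {Cell : Type}

/-- A discrete vector field: a set of pairs (σ,τ) with σ a facet of τ,
each cell occurring in at most one pair. -/
def IsVectorField (facet : Cell → Cell → Prop) (V : Set (Cell × Cell)) : Prop :=
  (∀ p ∈ V, facet p.1 p.2) ∧
  ∀ p ∈ V, ∀ q ∈ V, (p.1 = q.1 ∨ p.1 = q.2 ∨ p.2 = q.1 ∨ p.2 = q.2) → p = q

/-- The covering relation ←_V : `covRel facet V x y` means x ←_V y. -/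
def covRel (facet : Cell → Cell → Prop) (V : Set (Cell × Cell)) (x y : Cell) : Prop :=
  (facet x y ∧ (x, y) ∉ V) ∨ (y, x) ∈ V

/-- The strict partial order ≺_V induced by V: transitive closure of ←_V. -/
def indOrder (facet : Cell → Cell → Prop) (V : Set (Cell × Cell)) : Cell → Cell → Prop :=
  Relation.TransGen (covRel facet V)

/-- The reflexive closure ⪯_V of ≺_V. -/
def indOrderLe (facet : Cell → Cell → Prop) (V : Set (Cell × Cell)) : Cell → Cell → Prop :=
  Relation.ReflTransGen (covRel facet V)

/-- A V-path (σ₀,τ₀,σ₁,…,τ_{r-1},σ_r), encoded by its first cell σ₀ and the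
list of pairs (τ_i, σ_{i+1}). -/
def IsVPath (facet : Cell → Cell → Prop) (V : Set (Cell × Cell)) :
    Cell → List (Cell × Cell) → Prop
  | _, [] => True
  | σ, (τ, σ') :: rest => (σ, τ) ∈ V ∧ facet σ' τ ∧ (σ', τ) ∉ V ∧ IsVPath facet V σ' rest

/-- The last cell σ_r of a V-path. -/
def pathLast (σ : Cell) (l : List (Cell × Cell)) : Cell :=
  (l.getLast?.map Prod.snd).getD σ

/-- No nontrivial closed V-paths. -/
def NoClosedVPath (facet : Cell → Cell → Prop) (V : Set (Cell × Cell)) : Prop :=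
  ∀ σ (l : List (Cell × Cell)), IsVPath facet V σ l → l ≠ [] → pathLast σ l ≠ σ

/-- A discrete gradient vector field. -/
def IsGradient (facet : Cell → Cell → Prop) (V : Set (Cell × Cell)) : Prop :=
  IsVectorField facet V ∧ NoClosedVPath facet V

/-- A cell is critical if it belongs to no pair of V. -/
def IsCritical (V : Set (Cell × Cell)) (x : Cell) : Prop :=
  ∀ p ∈ V, p.1 ≠ x ∧ p.2 ≠ x

/-- f is a discrete Morse function with gradient vector field V. -/
def IsMorse (facet : Cell → Cell → Prop) (V : Set (Cell × Cell)) (f : Cell → ℝ) : Prop :=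
  ∀ σ τ, facet σ τ → (((σ, τ) ∉ V → f σ < f τ) ∧ ((σ, τ) ∈ V → f τ ≤ f σ))

/-- f is a discrete pseudo-Morse function consistent with V. -/
def IsPseudoMorse (facet : Cell → Cell → Prop) (V : Set (Cell × Cell)) (f : Cell → ℝ) : Prop :=
  ∀ σ τ, facet σ τ → (((σ, τ) ∉ V → f σ ≤ f τ) ∧ ((σ, τ) ∈ V → f τ ≤ f σ))

/-- The pairs (σ_i, τ_i) of a V-path given by σ₀ and l = [(τ₀,σ₁),…]. -/
def oldPairs (σ0 : Cell) (l : List (Cell × Cell)) : List (Cell × Cell) :=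
  List.zip (σ0 :: l.map Prod.snd) (l.map Prod.fst)

/-- The reversed pairs (σ_{i+1}, τ_i) of a V-path. -/
def newPairs (l : List (Cell × Cell)) : List (Cell × Cell) :=
  l.map (fun p => (p.2, p.1))

/-- Reversal of V along the V-path from σ₀ ∈ ∂ρ given by l (Forman cancelation). -/
def reverseField (V : Set (Cell × Cell)) (ρ σ0 : Cell) (l : List (Cell × Cell)) :
    Set (Cell × Cell) :=
  (V \ {p : Cell × Cell | p ∈ oldPairs σ0 l}) ∪ {p : Cell × Cell | p ∈ newPairs l} ∪ {(σ0, ρ)}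

/-- A combinatorial surface (closed): facets raise dimension by one, dimensions are ≤ 2,
every 1-cell has exactly two boundary 0-cells and is a facet of exactly two 2-cells. -/
def IsCombSurface (dim : Cell → ℕ) (facet : Cell → Cell → Prop) : Prop :=
  (∀ σ τ, facet σ τ → dim τ = dim σ + 1) ∧
  (∀ x, dim x ≤ 2) ∧
  (∀ τ, dim τ = 1 → ∃ a b, a ≠ b ∧ ∀ x, facet x τ ↔ (x = a ∨ x = b)) ∧
  (∀ τ, dim τ = 1 → ∃ A B, A ≠ B ∧ ∀ X, facet τ X ↔ (X = A ∨ X = B))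

/-- The step relation along V-paths: `stepRel facet V a b` means there is a one-step
V-path from `b` to `a`. -/
def stepRel (facet : Cell → Cell → Prop) (V : Set (Cell × Cell)) (a b : Cell) : Prop :=
  ∃ τ, (b, τ) ∈ V ∧ facet a τ ∧ (a, τ) ∉ V

lemma pathLast_cons (σ : Cell) (p : Cell × Cell) (l : List (Cell × Cell)) :
    pathLast σ (p :: l) = pathLast p.2 l := by
  cases l with
  | nil => simp [pathLast]
  | cons q r => simp [pathLast, List.getLast?]

lemma transGen_to_path (facet : Cell → Cell → Prop) (V : Set (Cell × Cell))
    {y x : Cell} (h : Relation.TransGen (stepRel facet V) y x) :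
    ∃ l : List (Cell × Cell), l ≠ [] ∧ IsVPath facet V x l ∧ pathLast x l = y := by
  induction h with
  | single hr =>
    obtain ⟨τ, h1, h2, h3⟩ := hr
    exact ⟨[(τ, y)], by simp, ⟨h1, h2, h3, trivial⟩, by simp [pathLast]⟩
  | tail _ hr ih =>
    obtain ⟨τ, h1, h2, h3⟩ := hr
    obtain ⟨l, hne, hp, hlast⟩ := ih
    refine ⟨(τ, _) :: l, by simp, ⟨h1, h2, h3, hp⟩, ?_⟩
    rw [pathLast_cons]; exact hlast

/-- if a gradient vector field on a finite regular CW complex has exactly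
one critical 0-cell σ, then from every 0-cell there is a V-path ending at σ. -/
theorem stmt8 [Fintype Cell] (dim : Cell → ℕ) (facet : Cell → Cell → Prop)
    (hdim : ∀ σ τ, facet σ τ → dim τ = dim σ + 1)
    (hreg : ∀ τ, dim τ = 1 → ∃ a b, a ≠ b ∧ ∀ x, facet x τ ↔ (x = a ∨ x = b))
    (V : Set (Cell × Cell)) (hV : IsGradient facet V)
    (σ : Cell) (hσ : dim σ = 0) (hcrit : IsCritical V σ)
    (huniq : ∀ x, dim x = 0 → IsCritical V x → x = σ) :
    ∀ x, dim x = 0 → ∃ l, IsVPath facet V x l ∧ pathLast x l = σ := by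
  obtain ⟨⟨hVf, hVinj⟩, hnc⟩ := hV
  have hwf : WellFounded (stepRel facet V) := by
    have hirr : IsIrrefl Cell (Relation.TransGen (stepRel facet V)) := by
      constructor
      intro a ha
      obtain ⟨l, hne, hp, hlast⟩ := transGen_to_path facet V ha
      exact hnc a l hp hne hlast
    have : WellFounded (Relation.TransGen (stepRel facet V)) :=
      Finite.wellFounded_of_trans_of_irrefl _
    exact Subrelation.wf (fun h => Relation.TransGen.single h) this
  intro x hx
  induction x using hwf.induction with
  | _ x ih =>
  by_cases hc : IsCritical V x
  · exact ⟨[], trivial, huniq x hx hc⟩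
  · simp only [IsCritical, not_forall] at hc
    obtain ⟨p, hpV, hp⟩ := hc
    -- x occurs in the pair p; since dim x = 0, it must be p.1
    have hx1 : p.1 = x := by
      by_contra h1
      have h2 : p.2 = x := by tauto
      have := hdim p.1 p.2 (hVf p hpV)
      rw [h2, hx] at this
      omega
    set τ := p.2 with hτ
    have hxτ : (x, τ) ∈ V := by rw [← hx1]; exact hpV
    have hfacet : facet x τ := by
      have := hVf p hpV; rwa [hx1] at this
    have hdτ : dim τ = 1 := by rw [hdim x τ hfacet, hx]
    obtain ⟨a, b, hab, hfac⟩ := hreg τ hdτ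
    have hxab : x = a ∨ x = b := (hfac x).1 hfacet
    obtain ⟨x', hx'ne, hx'fac⟩ : ∃ x', x' ≠ x ∧ facet x' τ := by
      rcases hxab with h | h
      · exact ⟨b, by rw [h]; exact hab.symm, (hfac b).2 (Or.inr rfl)⟩
      · exact ⟨a, by rw [h]; exact fun e => hab e, (hfac a).2 (Or.inl rfl)⟩
    have hx'V : (x', τ) ∉ V := by
      intro hmem
      have := hVinj (x, τ) hxτ (x', τ) hmem (by tauto)
      exact hx'ne (congrArg Prod.fst this).symm
    have hdx' : dim x' = 0 := by
      have := hdim x' τ hx'fac; omega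
    obtain ⟨l, hl, hlast⟩ := ih x' ⟨τ, hxτ, hx'fac, hx'V⟩ hdx'
    refine ⟨(τ, x') :: l, ⟨hxτ, hx'fac, hx'V, hl⟩, ?_⟩
    rw [pathLast_cons]; exact hlast
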